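/- arXiv:1910.10290 — 8 statements merged into one kernel-verified Lean document; each statement's English description precedes it below -/
import Mathlib

section
/- For all integers j ≤ k, G(j,k) > 0. -/
/-- Auxiliary recursion: `Gaux s α j n` corresponds to `G(j, j-1+n)`. -/
noncomputable def Gaux (s α : ℤ → ℝ) (j : ℤ) : ℕ → ℝ
  | 0 => 0
  | 1 => 1
  | (n+2) => (2 * s (j + n) + Real.cos (α (j + n)) + Real.cos (α (j + n + 1))) * Gaux s α j (n+1)
      - (Real.cos (α (j + n)))^2 * Gaux s α j n

/-- `G s α j k` is the recursively defined quantity `G(j,k)`, with `G(j,j-1)=0`, `G(j,j)=1`,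
`G(j,k) = (2 s_{k-1} + cos α_{k-1} + cos α_k) G(j,k-1) − cos²(α_{k-1}) G(j,k-2)` for `k ≥ j+1`. -/
noncomputable def G (s α : ℤ → ℝ) (j k : ℤ) : ℝ := Gaux s α j (k - (j-1)).toNat

/-- `Pprod α a b = ∏_{i=a}^{b-1} cos (α i)`. -/
noncomputable def Pprod (α : ℤ → ℝ) (a b : ℤ) : ℝ := ∏ i ∈ Finset.Ico a b, Real.cos (α i)

/-! The recurrence can be rewritten as
`x (n+2) - c (n+1) x (n+1) = 2 s n x (n+1) + c n (x (n+1) - c n x n)`,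
so the gaps `x (n+1) - c n x n` stay positive, and with them the terms `x (n+1) > c n x n ≥ 0`. -/

section Recurrence

variable {x s c : ℕ → ℝ}

theorem pos_and_mul_lt_succ_of_recurrence (hs : ∀ n, 0 < s n) (hc : ∀ n, 0 ≤ c n)
    (hx : ∀ n, x (n + 2) = (2 * s n + c n + c (n + 1)) * x (n + 1) - c n ^ 2 * x n)
    (h₁ : 0 < x 1) (h₀₁ : c 0 * x 0 < x 1) :
    ∀ n, 0 < x (n + 1) ∧ c n * x n < x (n + 1)
  | 0 => ⟨h₁, h₀₁⟩
  | n + 1 => by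
    obtain ⟨hpos, hgap⟩ := pos_and_mul_lt_succ_of_recurrence hs hc hx h₁ h₀₁ n
    have hgap' : c (n + 1) * x (n + 1) < x (n + 2) := by
      have hsplit : x (n + 2) - c (n + 1) * x (n + 1)
          = 2 * s n * x (n + 1) + c n * (x (n + 1) - c n * x n) := by
        rw [hx]; ring
      have := mul_nonneg (hc n) (sub_pos.2 hgap).le
      linarith [mul_pos (hs n) hpos]
    exact ⟨(mul_nonneg (hc (n + 1)) hpos.le).trans_lt hgap', hgap'⟩

end Recurrence

theorem Gaux_add_two (s α : ℤ → ℝ) (j : ℤ) (n : ℕ) :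
    Gaux s α j (n + 2) = (2 * s (j + n) + Real.cos (α (j + n)) + Real.cos (α (j + ↑(n + 1))))
      * Gaux s α j (n + 1) - Real.cos (α (j + n)) ^ 2 * Gaux s α j n := by
  rw [Gaux, Nat.cast_succ, ← add_assoc]

theorem G_add_natCast (s α : ℤ → ℝ) (j : ℤ) (n : ℕ) : G s α j (j + n) = Gaux s α j (n + 1) := by
  rw [G, show j + n - (j - 1) = ((n + 1 : ℕ) : ℤ) by push_cast; ring, Int.toNat_natCast]

theorem stmt0 (s α : ℤ → ℝ) (hs : ∀ i, 0 < s i) (hα : ∀ i, 0 < Real.cos (α i))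
    (j k : ℤ) (hjk : j ≤ k) : 0 < G s α j k := by
  obtain ⟨n, rfl⟩ : ∃ n : ℕ, k = j + n := ⟨(k - j).toNat, by omega⟩
  rw [G_add_natCast]
  exact (pos_and_mul_lt_succ_of_recurrence (fun n => hs (j + n)) (fun n => (hα (j + n)).le)
    (Gaux_add_two s α j) (by simp [Gaux]) (by simp [Gaux]) n).1
end

section
/- For all integers j < k, cos(α_k) · G(j,k-1) < G(j,k). -/
/-
Write `c_k = cos α_k` and `D_k = G(j,k) - c_k G(j,k-1)`. The recursion rearranges to
`D_{k+1} = 2 s_k G(j,k) + c_k D_k`, and `G(j,k) = D_k + c_k G(j,k-1)`, so `G(j,k) > 0` and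
`D_k > 0` propagate together by induction from `G(j,j) = 1`, `D_{j+1} = 2 s_j + c_j`.
-/

theorem Gaux_sub_cos_mul (s α : ℤ → ℝ) (j : ℤ) (n : ℕ) :
    Gaux s α j (n + 2) - Real.cos (α (j + n + 1)) * Gaux s α j (n + 1) =
      2 * s (j + n) * Gaux s α j (n + 1) +
        Real.cos (α (j + n)) * (Gaux s α j (n + 1) - Real.cos (α (j + n)) * Gaux s α j n) := by
  rw [Gaux]
  ring

theorem Gaux_pos_and_cos_mul_lt (s α : ℤ → ℝ) (hs : ∀ i, 0 < s i)
    (hα : ∀ i, 0 < Real.cos (α i)) (j : ℤ) (n : ℕ) :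
    0 < Gaux s α j (n + 1) ∧
      Real.cos (α (j + n + 1)) * Gaux s α j (n + 1) < Gaux s α j (n + 2) := by
  induction n with
  | zero =>
    have hstep := Gaux_sub_cos_mul s α j 0
    simp only [Gaux, Nat.cast_zero, add_zero, mul_zero, sub_zero, mul_one] at hstep ⊢
    exact ⟨one_pos, by nlinarith [hs j, hα j]⟩
  | succ n ih =>
    obtain ⟨hG, hD⟩ := ih
    have hG' : 0 < Gaux s α j (n + 2) := (mul_pos (hα _) hG).trans hD
    have hstep := Gaux_sub_cos_mul s α j (n + 1)
    have hidx : j + ((n + 1 : ℕ) : ℤ) = j + n + 1 := by push_cast; ring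
    rw [hidx] at hstep
    refine ⟨hG', ?_⟩
    rw [hidx]
    nlinarith [mul_pos (hs (j + n + 1)) hG', mul_pos (hα (j + n + 1)) (sub_pos.2 hD)]

theorem G_add_sub_one (s α : ℤ → ℝ) (j : ℤ) (n : ℕ) : G s α j (j + n - 1) = Gaux s α j n := by
  rw [G, show j + n - 1 - (j - 1) = n by ring, Int.toNat_natCast]

theorem stmt2 (s α : ℤ → ℝ) (hs : ∀ i, 0 < s i) (hα : ∀ i, 0 < Real.cos (α i))
    (j k : ℤ) (hjk : j < k) :
    Real.cos (α k) * G s α j (k-1) < G s α j k := by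
  obtain ⟨n, rfl⟩ : ∃ n : ℕ, k = j + n + 1 := ⟨(k - j - 1).toNat, by omega⟩
  have hprev : j + n + 1 - 1 = j + ((n + 1 : ℕ) : ℤ) - 1 := by push_cast; ring
  have hcur : j + n + 1 = j + ((n + 2 : ℕ) : ℤ) - 1 := by push_cast; ring
  rw [hprev, G_add_sub_one, hcur, G_add_sub_one, ← hcur]
  exact (Gaux_pos_and_cos_mul_lt s α hs hα j n).2
end

section
/- For all integers j ≤ k, G(j,k) > Π(j+1, k+1), where Π(a,b) denotes the product of cos(α_i) for a ≤ i ≤ b−1. -/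
/- Writing `g n = Gaux s α j n` and `c n = cos (α (j + n))`, the recursion gives
`g (n+2) - c (n+1) * g (n+1) = 2 s (j+n) * g (n+1) + c n * (g (n+1) - c n * g n)`, so the
invariant `c n * g n < g (n+1)` propagates. Iterating `g (n+1) > c n * g n` from `g 1 = 1`
bounds `g` from below by the products of the cosines, strictly from the second step on. -/

theorem Pprod_add_one (α : ℤ → ℝ) {a b : ℤ} (hab : a ≤ b) :
    Pprod α a (b + 1) = Pprod α a b * Real.cos (α b) :=
  (Finset.prod_Ico_mul_eq_prod_Ico_add_one hab _).symm

theorem G_sub_one_add (s α : ℤ → ℝ) (j : ℤ) (n : ℕ) : G s α j (j - 1 + n) = Gaux s α j n := by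
  simp [G]

namespace Gaux

variable {s α : ℤ → ℝ} (hs : ∀ i, 0 ≤ s i) (hα : ∀ i, 0 < Real.cos (α i)) (j : ℤ)
include hs hα

theorem cos_mul_lt_succ_and_pos (n : ℕ) :
    Real.cos (α (j + n)) * Gaux s α j n < Gaux s α j (n + 1) ∧ 0 < Gaux s α j (n + 1) := by
  induction n with
  | zero => simp [Gaux]
  | succ n ih =>
    obtain ⟨hstep, hpos⟩ := ih
    have hidx : j + ((n + 1 : ℕ) : ℤ) = j + n + 1 := by push_cast; ring
    have hgap : Gaux s α j (n + 2) - Real.cos (α (j + n + 1)) * Gaux s α j (n + 1)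
        = 2 * s (j + n) * Gaux s α j (n + 1)
          + Real.cos (α (j + n)) * (Gaux s α j (n + 1) - Real.cos (α (j + n)) * Gaux s α j n) := by
      rw [Gaux]; ring
    have hgap_pos : 0 < Gaux s α j (n + 2) - Real.cos (α (j + n + 1)) * Gaux s α j (n + 1) := by
      rw [hgap]
      have := mul_nonneg (mul_nonneg zero_le_two (hs (j + n))) hpos.le
      have := mul_pos (hα (j + n)) (sub_pos.2 hstep)
      linarith
    have := mul_pos (hα (j + n + 1)) hpos
    rw [hidx]
    constructor <;> linarith

theorem Pprod_lt_of_le {n : ℕ} (h : Pprod α (j + 1) (j + 1 + n) ≤ Gaux s α j (n + 1)) :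
    Pprod α (j + 1) (j + 2 + n) < Gaux s α j (n + 2) := by
  have hstep := (cos_mul_lt_succ_and_pos hs hα j (n + 1)).1
  have hidx : j + ((n + 1 : ℕ) : ℤ) = j + 1 + n := by push_cast; ring
  rw [hidx] at hstep
  calc Pprod α (j + 1) (j + 2 + n)
      = Pprod α (j + 1) (j + 1 + n) * Real.cos (α (j + 1 + n)) := by
        rw [← Pprod_add_one α (by omega)]; ring_nf
    _ ≤ Gaux s α j (n + 1) * Real.cos (α (j + 1 + n)) :=
        mul_le_mul_of_nonneg_right h (hα _).le
    _ < Gaux s α j (n + 2) := by linarith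

theorem Pprod_le (n : ℕ) : Pprod α (j + 1) (j + 1 + n) ≤ Gaux s α j (n + 1) := by
  induction n with
  | zero => simp [Pprod, Gaux]
  | succ n ih =>
    have := (Pprod_lt_of_le hs hα j ih).le
    rwa [show j + 1 + ((n + 1 : ℕ) : ℤ) = j + 2 + n by push_cast; ring]

end Gaux

theorem stmt3_general (s α : ℤ → ℝ) (hs : ∀ i, 0 < s i)
    (hα : ∀ i, 0 < Real.cos (α i))
    (j k : ℤ) (hjk : j < k) :
    G s α j k > Pprod α (j+1) (k+1) := by
  obtain ⟨n, rfl⟩ : ∃ n : ℕ, k = j + 1 + n := ⟨(k - j - 1).toNat, by omega⟩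
  have hs' : ∀ i, 0 ≤ s i := fun i => (hs i).le
  have hlt := Gaux.Pprod_lt_of_le hs' hα j (Gaux.Pprod_le hs' hα j n)
  rw [show j + 1 + (n : ℤ) = j - 1 + ((n + 2 : ℕ) : ℤ) by push_cast; ring, G_sub_one_add]
  rwa [show j - 1 + ((n + 2 : ℕ) : ℤ) + 1 = j + 2 + n by push_cast; ring]

theorem stmt3 (s α : ℤ → ℝ) (hs : ∀ i, 0 < s i)
    (hα : ∀ i, 0 < Real.cos (α i)) (hα' : ∀ i, Real.cos (α i) ≤ 1)
    (j k : ℤ) (hjk : j < k) :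
    G s α j k > Pprod α (j+1) (k+1) :=
  stmt3_general s α hs hα j k hjk
end

section
/- For all integers i ≤ j ≤ k, G(i,k) = G(i,j)·G(j,k) − cos²(α_j)·G(i,j-1)·G(j+1,k). -/
/-! Both sides of the identity, as functions of `k`, solve the three-term recurrence defining
`G(i, ·)` from `k = j` on, and they agree at `k = j` and `k = j + 1`. -/

theorem eq_of_threeTermRecurrence {a b f g : ℤ → ℝ} {m : ℤ}
    (hf : ∀ k, m + 2 ≤ k → f k = a k * f (k - 1) - b k * f (k - 2))
    (hg : ∀ k, m + 2 ≤ k → g k = a k * g (k - 1) - b k * g (k - 2))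
    (h₀ : f m = g m) (h₁ : f (m + 1) = g (m + 1)) {k : ℤ} (hk : m ≤ k) : f k = g k := by
  suffices f k = g k ∧ f (k + 1) = g (k + 1) from this.1
  induction k, hk using Int.leInduction with
  | base => exact ⟨h₀, h₁⟩
  | succ n hn ih =>
    refine ⟨ih.2, ?_⟩
    have e₁ : n + 1 + 1 - 1 = n + 1 := by ring
    have e₂ : n + 1 + 1 - 2 = n := by ring
    rw [hf _ (by omega), hg _ (by omega), e₁, e₂, ih.1, ih.2]

section

variable (s α : ℤ → ℝ)

lemma G_self (j : ℤ) : G s α j j = 1 := by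
  simp [G, Gaux]

lemma G_eq_zero_of_add_one_eq {j k : ℤ} (h : k + 1 = j) : G s α j k = 0 := by
  simp [G, show (k - (j - 1)).toNat = 0 by omega, Gaux]

lemma G_rec {j k : ℤ} (h : j + 1 ≤ k) :
    G s α j k = (2 * s (k - 1) + Real.cos (α (k - 1)) + Real.cos (α k)) * G s α j (k - 1)
      - Real.cos (α (k - 1)) ^ 2 * G s α j (k - 2) := by
  obtain ⟨n, hn⟩ : ∃ n : ℕ, (k - (j - 1)).toNat = n + 2 := ⟨(k - j - 1).toNat, by omega⟩
  have h₁ : (k - 1 - (j - 1)).toNat = n + 1 := by omega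
  have h₂ : (k - 2 - (j - 1)).toNat = n := by omega
  have hk : j + (n : ℤ) = k - 1 := by omega
  simp only [G, hn, h₁, h₂, Gaux, hk, sub_add_cancel]

lemma G_self_add_one (j : ℤ) :
    G s α j (j + 1) = 2 * s j + Real.cos (α j) + Real.cos (α (j + 1)) := by
  rw [G_rec s α le_rfl, add_sub_cancel_right, G_self,
    G_eq_zero_of_add_one_eq s α (by ring : j + 1 - 2 + 1 = j)]
  ring

end

theorem stmt5 (s α : ℤ → ℝ) (i j k : ℤ) (hij : i ≤ j) (hjk : j ≤ k) :
    G s α i k = G s α i j * G s α j k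
      - (Real.cos (α j))^2 * G s α i (j-1) * G s α (j+1) k := by
  refine eq_of_threeTermRecurrence (m := j)
    (g := fun k => G s α i j * G s α j k - Real.cos (α j) ^ 2 * G s α i (j - 1) * G s α (j + 1) k)
    (fun k hk => G_rec s α (by omega : i + 1 ≤ k)) (fun k hk => ?_) ?_ ?_ hjk
  · rw [G_rec s α (by omega : j + 1 ≤ k), G_rec s α (by omega : j + 1 + 1 ≤ k)]
    ring
  · rw [G_self, G_eq_zero_of_add_one_eq s α rfl]
    ring
  · rw [G_rec s α (by omega : i + 1 ≤ j + 1), G_self_add_one, G_self, add_sub_cancel_right,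
      (by ring : j + 1 - 2 = j - 1)]
    ring
end

section
/- For all integers j < k, G(j,k) > Π(j,k), where Π(j,k) = ∏_{i=j}^{k-1} cos(α_i). -/
/-!
Writing `D n = g (n+1) - c n * g n`, the recurrence becomes
`D (n+1) = 2 a n * g (n+1) + c n * D n` and `g (n+2) = c (n+1) * g (n+1) + D (n+1)`.
With `a ≥ 0` and `c > 0` this gives by induction `g (n+1) > 0` and `D n ≥ c 0 ⋯ c (n-1)`,
and then `g (n+2) > D (n+1) ≥ c 0 ⋯ c n`. Here `g n = G(j, j-1+n)`, `a n = s (j+n)` and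
`c n = cos (α (j+n))`.
-/

section ThreeTermRecurrence

variable {g a c : ℕ → ℝ}
  (hrec : ∀ n, g (n + 2) = (2 * a n + c n + c (n + 1)) * g (n + 1) - c n ^ 2 * g n)
include hrec

theorem sub_mul_succ_eq_of_recurrence (n : ℕ) :
    g (n + 2) - c (n + 1) * g (n + 1) = 2 * a n * g (n + 1) + c n * (g (n + 1) - c n * g n) := by
  rw [hrec]; ring

variable (hg₀ : g 0 = 0) (hg₁ : g 1 = 1) (ha : ∀ n, 0 ≤ a n) (hc : ∀ n, 0 < c n)
include hg₀ hg₁ ha hc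

theorem pos_and_prod_range_le_of_recurrence (n : ℕ) :
    0 < g (n + 1) ∧ ∏ i ∈ Finset.range n, c i ≤ g (n + 1) - c n * g n := by
  induction n with
  | zero => simp [hg₀, hg₁]
  | succ n ih =>
    obtain ⟨hpos, hD⟩ := ih
    have hstep := sub_mul_succ_eq_of_recurrence hrec n
    have hprod : 0 < ∏ i ∈ Finset.range (n + 1), c i := Finset.prod_pos fun i _ => hc i
    have hD' : ∏ i ∈ Finset.range (n + 1), c i ≤ g (n + 2) - c (n + 1) * g (n + 1) := by
      rw [Finset.prod_range_succ, hstep]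
      nlinarith [mul_le_mul_of_nonneg_left hD (hc n).le, mul_nonneg (ha n) hpos.le]
    exact ⟨by nlinarith [hc (n + 1)], hD'⟩

theorem prod_range_lt_of_recurrence (n : ℕ) : ∏ i ∈ Finset.range (n + 1), c i < g (n + 2) := by
  have hpos := (pos_and_prod_range_le_of_recurrence hrec hg₀ hg₁ ha hc n).1
  have hD := (pos_and_prod_range_le_of_recurrence hrec hg₀ hg₁ ha hc (n + 1)).2
  nlinarith [mul_pos (hc (n + 1)) hpos]

end ThreeTermRecurrence

theorem Pprod_add_eq_prod_range (α : ℤ → ℝ) (j : ℤ) (n : ℕ) :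
    Pprod α j (j + n) = ∏ i ∈ Finset.range n, Real.cos (α (j + i)) := by
  induction n with
  | zero => simp [Pprod]
  | succ n ih =>
    rw [Finset.prod_range_succ, ← ih, Pprod, Pprod, Nat.cast_succ, ← add_assoc,
      Finset.prod_Ico_mul_eq_prod_Ico_add_one (by omega)]

theorem stmt8_general (s α : ℤ → ℝ) (hs : ∀ i, 0 < s i)
    (hα : ∀ i, 0 < Real.cos (α i))
    (j k : ℤ) (hjk : j < k) :
    G s α j k > Pprod α j k := by
  obtain ⟨m, rfl⟩ : ∃ m : ℕ, k = j + ↑(m + 1) := ⟨(k - j - 1).toNat, by omega⟩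
  have hG : G s α j (j + ↑(m + 1)) = Gaux s α j (m + 2) := by
    rw [G]; congr 1; omega
  rw [hG, Pprod_add_eq_prod_range]
  exact prod_range_lt_of_recurrence (Gaux_add_two s α j) rfl rfl (fun n => (hs _).le)
    (fun n => hα _) m

theorem stmt8 (s α : ℤ → ℝ) (hs : ∀ i, 0 < s i)
    (hα : ∀ i, 0 < Real.cos (α i)) (hα' : ∀ i, Real.cos (α i) ≤ 1)
    (j k : ℤ) (hjk : j < k) :
    G s α j k > Pprod α j k :=
  stmt8_general s α hs hα j k hjk
end

section
/- Let N ≥ 2, all s_i > 0, all cos α_i ∈ (0,1]. Then (G(0,N-1) − cos(α_0) G(1,N-1)) / G(0,N-1) > 2 s_0 / (2 s_0 + cos α_0). -/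
open Real

theorem Gaux_add_two_eq_shift (s α : ℤ → ℝ) (j : ℤ) : ∀ n : ℕ,
    Gaux s α j (n + 2) = (2 * s j + cos (α j) + cos (α (j + 1))) * Gaux s α (j + 1) (n + 1)
      - cos (α (j + 1)) ^ 2 * Gaux s α (j + 2) n
  | 0 => by simp [Gaux]
  | 1 => by simp [Gaux]; ring_nf
  | n + 2 => by
    rw [Gaux, Gaux_add_two_eq_shift s α j (n + 1), Gaux_add_two_eq_shift s α j n]
    simp only [Gaux]
    push_cast
    ring_nf

theorem Gaux_add_two_sub_mul_eq (s α : ℤ → ℝ) (j : ℤ) (n : ℕ) :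
    Gaux s α j (n + 2) - (2 * s j + cos (α j)) * Gaux s α (j + 1) (n + 1)
      = cos (α (j + 1)) * (Gaux s α (j + 1) (n + 1) - cos (α (j + 1)) * Gaux s α (j + 2) n) := by
  rw [Gaux_add_two_eq_shift]
  ring

section

variable {s α : ℤ → ℝ}

theorem Gaux_nonneg_and_cos_mul_lt (hs : ∀ i, 0 ≤ s i) (hα : ∀ i, 0 < cos (α i)) (n : ℕ) :
    ∀ j, 0 ≤ Gaux s α j n ∧ cos (α j) * Gaux s α (j + 1) n < Gaux s α j (n + 1) := by
  induction n with
  | zero => intro j; simp [Gaux]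
  | succ n ih =>
    have step : ∀ j, cos (α j) * Gaux s α (j + 1) (n + 1) < Gaux s α j (n + 2) := by
      intro j
      have hXY : cos (α (j + 1)) * Gaux s α (j + 2) n < Gaux s α (j + 1) (n + 1) := by
        simpa only [add_assoc, one_add_one_eq_two] using (ih (j + 1)).2
      have hX : 0 < Gaux s α (j + 1) (n + 1) :=
        (mul_nonneg (hα _).le (ih (j + 2)).1).trans_lt hXY
      linarith [Gaux_add_two_sub_mul_eq s α j n, mul_pos (hα (j + 1)) (sub_pos.2 hXY),
        mul_nonneg (hs j) hX.le]
    intro j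
    refine ⟨?_, step j⟩
    linarith [(ih j).2, mul_nonneg (hα j).le (ih (j + 1)).1]

theorem Gaux_succ_pos (hs : ∀ i, 0 ≤ s i) (hα : ∀ i, 0 < cos (α i)) (j : ℤ) (n : ℕ) :
    0 < Gaux s α j (n + 1) :=
  (mul_nonneg (hα j).le (Gaux_nonneg_and_cos_mul_lt hs hα n (j + 1)).1).trans_lt
    (Gaux_nonneg_and_cos_mul_lt hs hα n j).2

theorem mul_Gaux_lt_Gaux_add_two (hs : ∀ i, 0 ≤ s i) (hα : ∀ i, 0 < cos (α i)) (j : ℤ) (n : ℕ) :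
    (2 * s j + cos (α j)) * Gaux s α (j + 1) (n + 1) < Gaux s α j (n + 2) := by
  have hXY : cos (α (j + 1)) * Gaux s α (j + 2) n < Gaux s α (j + 1) (n + 1) := by
    simpa only [add_assoc, one_add_one_eq_two] using
      (Gaux_nonneg_and_cos_mul_lt hs hα n (j + 1)).2
  linarith [Gaux_add_two_sub_mul_eq s α j n, mul_pos (hα (j + 1)) (sub_pos.2 hXY)]

end

theorem stmt15_general (s α : ℤ → ℝ) (N : ℤ) (hN : 2 ≤ N)
    (hs : ∀ i, 0 < s i)
    (hα : ∀ i, 0 < Real.cos (α i)) :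
    (G s α 0 (N-1) - Real.cos (α 0) * G s α 1 (N-1)) / G s α 0 (N-1)
      > 2 * s 0 / (2 * s 0 + Real.cos (α 0)) := by
  obtain ⟨m, rfl⟩ : ∃ m : ℕ, N = m + 2 := ⟨(N - 2).toNat, by omega⟩
  have hG0 : G s α 0 (m + 2 - 1) = Gaux s α 0 (m + 2) := by unfold G; congr 1; omega
  have hG1 : G s α 1 (m + 2 - 1) = Gaux s α 1 (m + 1) := by unfold G; congr 1; omega
  have hs' : ∀ i, 0 ≤ s i := fun i => (hs i).le
  have hG1_pos := Gaux_succ_pos hs' hα 1 m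
  have hlt : (2 * s 0 + cos (α 0)) * Gaux s α 1 (m + 1) < Gaux s α 0 (m + 2) := by
    simpa only [zero_add] using mul_Gaux_lt_Gaux_add_two hs' hα 0 m
  have ha : 0 < 2 * s 0 + cos (α 0) := by linarith [hs 0, hα 0]
  rw [hG0, hG1, gt_iff_lt, div_lt_div_iff₀ ha (by nlinarith)]
  nlinarith [mul_lt_mul_of_pos_left hlt (hα 0)]

theorem stmt15 (s α : ℤ → ℝ) (N : ℤ) (hN : 2 ≤ N)
    (hs : ∀ i, 0 < s i)
    (hα : ∀ i, 0 < Real.cos (α i)) (hα' : ∀ i, Real.cos (α i) ≤ 1) :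
    (G s α 0 (N-1) - Real.cos (α 0) * G s α 1 (N-1)) / G s α 0 (N-1)
      > 2 * s 0 / (2 * s 0 + Real.cos (α 0)) :=
  stmt15_general s α N hN hs hα
end

section
/- Let N ≥ 2, and suppose m ≤ s_i ≤ M for all i with 0 < m ≤ M, and 0 < cos α_i ≤ 1 for all i, with α_N = α_0. Then cos(α_0) · (G(0,N-1) − cos α_0 · G(1,N-1)) / G(0,N) > m · cos(α_0) / ((M+1)(2m+1)). -/
/-! Write `a_n = G(0, n-1)`, `b_n = G(1, n)` and `c_i = cos α_i`. The recurrence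
`u_{n+2} = (2 p_n + q_n + q_{n+1}) u_{n+1} - q_n² u_n` with `p, q > 0` propagates the invariant
`q_n u_n ≤ u_{n+1}` (as `u_{n+2} - q_{n+1} u_{n+1} ≥ 2 p_n u_{n+1} + q_n (u_{n+1} - q_n u_n)`), so its
solutions stay positive. This applies to `a`, to `b`, and to `a_{n+1} - (2 s_0 + c_0) b_n`, which
solves the shifted recurrence. Hence `a_{N+1} ≤ (2M + 2) a_N` and `(2 s_0 + c_0) b_{N-1} < a_N`,
and the two bounds combine to the claim. -/

open Real

def GRecurrence (p q u : ℕ → ℝ) : Prop :=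
  ∀ n, u (n + 2) = (2 * p n + q n + q (n + 1)) * u (n + 1) - q n ^ 2 * u n

namespace GRecurrence

variable {p q u : ℕ → ℝ}

theorem mul_lt_of_mul_le (h : GRecurrence p q u) {n : ℕ} (hp : 0 < p n) (hq : 0 ≤ q n)
    (hu : 0 < u (n + 1)) (hle : q n * u n ≤ u (n + 1)) : q (n + 1) * u (n + 1) < u (n + 2) := by
  rw [h n]
  nlinarith [mul_pos hp hu, mul_nonneg hq (sub_nonneg.2 hle)]

theorem pos_and_mul_lt (h : GRecurrence p q u) (hp : ∀ n, 0 < p n) (hq : ∀ n, 0 < q n)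
    (hu1 : 0 < u 1) (hu0 : q 0 * u 0 ≤ u 1) (n : ℕ) :
    0 < u (n + 1) ∧ q (n + 1) * u (n + 1) < u (n + 2) := by
  induction n with
  | zero => exact ⟨hu1, h.mul_lt_of_mul_le (hp 0) (hq 0).le hu1 hu0⟩
  | succ n ih =>
    have hpos : 0 < u (n + 2) := (mul_pos (hq _) ih.1).trans ih.2
    exact ⟨hpos, h.mul_lt_of_mul_le (hp _) (hq _).le hpos ih.2.le⟩

theorem pos (h : GRecurrence p q u) (hp : ∀ n, 0 < p n) (hq : ∀ n, 0 < q n)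
    (hu1 : 0 < u 1) (hu0 : q 0 * u 0 ≤ u 1) (n : ℕ) : 0 < u (n + 1) :=
  (h.pos_and_mul_lt hp hq hu1 hu0 n).1

theorem le_mul (h : GRecurrence p q u) {n : ℕ} {B : ℝ} (hpB : p n ≤ B) (hq : q n ≤ 1)
    (hq' : q (n + 1) ≤ 1) (hu : 0 ≤ u n) (hu' : 0 ≤ u (n + 1)) :
    u (n + 2) ≤ (2 * B + 2) * u (n + 1) := by
  rw [h n]
  nlinarith [sq_nonneg (q n), mul_nonneg (sq_nonneg (q n)) hu]

end GRecurrence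

theorem gRecurrence_Gaux (s α : ℤ → ℝ) (j : ℤ) :
    GRecurrence (fun n => s (j + n)) (fun n => cos (α (j + n))) (Gaux s α j) := by
  intro n
  simp only [Nat.cast_add, Nat.cast_one, ← add_assoc]
  rfl

theorem gRecurrence_Gaux_sub (s α : ℤ → ℝ) :
    GRecurrence (fun n => s (1 + n)) (fun n => cos (α (1 + n)))
      (fun n => Gaux s α 0 (n + 1) - (2 * s 0 + cos (α 0)) * Gaux s α 1 n) := by
  intro n
  simp only [gRecurrence_Gaux s α 0 (n + 1), gRecurrence_Gaux s α 1 n]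
  push_cast
  ring_nf

theorem Gaux_pos {s α : ℤ → ℝ} (hs : ∀ i, 0 < s i) (hα : ∀ i, 0 < cos (α i)) (j : ℤ) (n : ℕ) :
    0 < Gaux s α j (n + 1) :=
  (gRecurrence_Gaux s α j).pos (fun _ => hs _) (fun _ => hα _) one_pos
    (by simp [Gaux]) n

theorem mul_Gaux_one_lt_Gaux_zero {s α : ℤ → ℝ} (hs : ∀ i, 0 < s i) (hα : ∀ i, 0 < cos (α i))
    (n : ℕ) : (2 * s 0 + cos (α 0)) * Gaux s α 1 (n + 1) < Gaux s α 0 (n + 2) := by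
  have := (gRecurrence_Gaux_sub s α).pos (fun _ => hs _) (fun _ => hα _) ?_ ?_ n
  · simpa using this
  · simp [Gaux, hα 1]
  · simp [Gaux]

theorem G_eq_Gaux (s α : ℤ → ℝ) {j k : ℤ} {n : ℕ} (h : k = j - 1 + n) :
    G s α j k = Gaux s α j n := by
  simp [G, h]

theorem stmt16_general (s α : ℤ → ℝ) (N : ℤ) (hN : 2 ≤ N)
    (m M : ℝ) (hm : 0 < m)
    (hsm : ∀ i, m ≤ s i) (hsM : ∀ i, s i ≤ M)
    (hα : ∀ i, 0 < Real.cos (α i)) (hα' : ∀ i, Real.cos (α i) ≤ 1) :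
    Real.cos (α 0) * (G s α 0 (N-1) - Real.cos (α 0) * G s α 1 (N-1)) / G s α 0 N
      > m * Real.cos (α 0) / ((M + 1) * (2 * m + 1)) := by
  have hs : ∀ i, 0 < s i := fun i => hm.trans_le (hsm i)
  obtain ⟨n, rfl⟩ : ∃ n : ℕ, N = n + 2 := ⟨(N - 2).toNat, by omega⟩
  rw [show G s α 0 (n + 2) = Gaux s α 0 (n + 3) from G_eq_Gaux s α (by push_cast; ring),
    show G s α 0 (n + 2 - 1) = Gaux s α 0 (n + 2) from G_eq_Gaux s α (by push_cast; ring),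
    show G s α 1 (n + 2 - 1) = Gaux s α 1 (n + 1) from G_eq_Gaux s α (by push_cast; ring)]
  set c := cos (α 0)
  have ha := Gaux_pos hs hα 0 (n + 1)
  have hb := Gaux_pos hs hα 1 n
  have hM : 0 < M + 1 := by linarith [hs 0, hsM 0]
  have hgrowth : Gaux s α 0 (n + 3) ≤ 2 * (M + 1) * Gaux s α 0 (n + 2) := by
    have := (gRecurrence_Gaux s α 0).le_mul (hsM _) (hα' _) (hα' _)
      (Gaux_pos hs hα 0 n).le ha.le
    linarith
  have hdrop : 2 * m * Gaux s α 0 (n + 2)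
      < (2 * m + 1) * (Gaux s α 0 (n + 2) - c * Gaux s α 1 (n + 1)) := by
    nlinarith [mul_Gaux_one_lt_Gaux_zero hs hα n, hsm 0, hα 0, hα' 0, mul_pos hm hb]
  rw [gt_iff_lt, div_lt_div_iff₀ (by positivity) (Gaux_pos hs hα 0 (n + 2))]
  calc m * c * Gaux s α 0 (n + 3) ≤ m * c * (2 * (M + 1) * Gaux s α 0 (n + 2)) := by
        gcongr; exact (mul_pos hm (hα 0)).le
    _ = c * (M + 1) * (2 * m * Gaux s α 0 (n + 2)) := by ring
    _ < c * (M + 1) * ((2 * m + 1) * (Gaux s α 0 (n + 2) - c * Gaux s α 1 (n + 1))) := by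
        gcongr; exact mul_pos (hα 0) hM
    _ = c * (Gaux s α 0 (n + 2) - c * Gaux s α 1 (n + 1)) * ((M + 1) * (2 * m + 1)) := by ring

theorem stmt16 (s α : ℤ → ℝ) (N : ℤ) (hN : 2 ≤ N) (hper : α N = α 0)
    (m M : ℝ) (hm : 0 < m) (hmM : m ≤ M)
    (hsm : ∀ i, m ≤ s i) (hsM : ∀ i, s i ≤ M)
    (hα : ∀ i, 0 < Real.cos (α i)) (hα' : ∀ i, Real.cos (α i) ≤ 1) :
    Real.cos (α 0) * (G s α 0 (N-1) - Real.cos (α 0) * G s α 1 (N-1)) / G s α 0 N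
      > m * Real.cos (α 0) / ((M + 1) * (2 * m + 1)) :=
  stmt16_general s α N hN m M hm hsm hsM hα hα'
end

section
/- Let N ≥ 2 with α_N = α_0, 0 < cos α_i ≤ 1 and s_i ≥ m > 0 for all i. Set P := (−1)^{N+1}Π(0,N), P₁ := (−1)^{N+1}Π(1,N), and D := G(0,N) − cos²(α_0) G(1,N-1) + 2P. Then each of the quantities G(1,N)/D, G(0,N-1)/D, cos(α_0)·G(1,N-1)/D, and |P₁|/D is strictly less than 1/(2m); consequently, for any θ, α₀ ∈ ℝ, the derivative bound |α_0'| = |(1/D)·[(G(1,N) + cos α_0 G(1,N-1) − P₁)·sin(α_0+θ) + (G(0,N-1) + cos α_0 G(1,N-1) − P₁)·sin(α_0−θ)]| < 3/m holds. -/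
lemma Gaux_rec (s α : ℤ → ℝ) (j : ℤ) (n : ℕ) :
    Gaux s α j (n+2) = (2 * s (j + n) + Real.cos (α (j + n)) + Real.cos (α (j + n + 1))) * Gaux s α j (n+1)
      - (Real.cos (α (j + n)))^2 * Gaux s α j n := rfl

lemma master (s α : ℤ → ℝ) (m : ℝ) (hm : 0 < m) (hsm : ∀ i, m ≤ s i)
    (hα : ∀ i, 0 < Real.cos (α i)) :
    ∀ n : ℕ, ∀ j : ℤ, 0 ≤ Gaux s α j n ∧
      (∏ i ∈ Finset.range n, Real.cos (α (j + i))) +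
        (Real.cos (α (j + n)) + 2*m) * Gaux s α j n ≤ Gaux s α j (n+1) := by
  intro n
  induction n with
  | zero => intro j; simp [Gaux]
  | succ n ih =>
    intro j
    obtain ⟨h0, hR⟩ := ih j
    have hprod : 0 < ∏ i ∈ Finset.range n, Real.cos (α (j + i)) :=
      Finset.prod_pos fun i _ => hα _
    have hc : 0 < Real.cos (α (j + n)) := hα _
    have hc1 : 0 < Real.cos (α (j + n + 1)) := hα _
    have h0' : 0 ≤ Gaux s α j (n+1) := by
      have h2 : 0 ≤ (Real.cos (α (j + n)) + 2*m) * Gaux s α j n :=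
        mul_nonneg (by linarith) h0
      linarith
    refine ⟨h0', ?_⟩
    rw [Gaux_rec]
    have hcast : (j + ((n:ℕ)+1:ℕ) : ℤ) = j + n + 1 := by push_cast; ring
    rw [hcast, Finset.prod_range_succ]
    have hstep : (Real.cos (α (j + n)))^2 * Gaux s α j n
        ≤ Real.cos (α (j+n)) * (Gaux s α j (n+1) - ∏ i ∈ Finset.range n, Real.cos (α (j + i))) := by
      have h1 : Real.cos (α (j+n)) * Gaux s α j n
          ≤ Gaux s α j (n+1) - ∏ i ∈ Finset.range n, Real.cos (α (j + i)) := by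
        nlinarith [mul_nonneg hm.le h0]
      nlinarith [hc, mul_le_mul_of_nonneg_left h1 hc.le]
    have hs := hsm (j + n)
    nlinarith [mul_le_mul_of_nonneg_right hs h0']

lemma leftrec (s α : ℤ → ℝ) :
    ∀ n : ℕ, ∀ j : ℤ, Gaux s α j (n+2) =
      (2 * s j + Real.cos (α j) + Real.cos (α (j+1))) * Gaux s α (j+1) (n+1)
        - (Real.cos (α (j+1)))^2 * Gaux s α (j+2) n := by
  intro n
  induction n using Nat.strong_induction_on with
  | _ n ih =>
    match n with
    | 0 =>
      intro j
      show Gaux s α j 2 = _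
      rw [Gaux_rec]
      simp [Gaux]
    | 1 =>
      intro j
      show Gaux s α j 3 = _
      rw [show (3:ℕ) = 1+2 from rfl, Gaux_rec, Gaux_rec, Gaux_rec]
      simp only [Gaux, Nat.cast_one, Nat.cast_zero, Nat.cast_ofNat]
      push_cast
      ring_nf
    | (n+2) =>
      intro j
      have h1 := ih n (by omega) j
      have h2 := ih (n+1) (by omega) j
      conv_lhs => rw [Gaux_rec s α j (n+2)]
      rw [show (n+2+1 : ℕ) = (n+1)+2 from rfl, h2, h1,
        Gaux_rec s α (j+1) (n+1), Gaux_rec s α (j+2) n]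
      push_cast
      ring_nf

lemma masterL (s α : ℤ → ℝ) (m : ℝ) (hm : 0 < m) (hsm : ∀ i, m ≤ s i)
    (hα : ∀ i, 0 < Real.cos (α i)) :
    ∀ n : ℕ, ∀ j : ℤ,
      (∏ i ∈ Finset.range n, Real.cos (α (j + 1 + i))) +
        (Real.cos (α j) + 2*m) * Gaux s α (j+1) n ≤ Gaux s α j (n+1) := by
  intro n
  induction n with
  | zero => intro j; simp [Gaux]
  | succ n ih =>
    intro j
    rw [leftrec]
    have hIH := ih (j+1)
    have h0 := (master s α m hm hsm hα n (j+2)).1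
    have h0' := (master s α m hm hsm hα (n+1) (j+1)).1
    have hc1 : 0 < Real.cos (α (j+1)) := hα _
    have hc0 : 0 < Real.cos (α j) := hα _
    have hprodL : (∏ i ∈ Finset.range (n+1), Real.cos (α (j + 1 + i)))
        = Real.cos (α (j+1)) * ∏ i ∈ Finset.range n, Real.cos (α (j + 2 + i)) := by
      rw [Finset.prod_range_succ']
      have e : ∀ i : ℕ, (j + 1 + ((i+1:ℕ):ℤ)) = j + 2 + i := by intro i; push_cast; ring
      simp only [e, Nat.cast_zero, add_zero]
      ring
    rw [hprodL]
    have e2 : ∀ i : ℕ, (j + 1 + 1 + (i:ℤ)) = j + 2 + i := by intro i; ring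
    simp only [e2, show (j+1+1:ℤ) = j+2 from by ring] at hIH
    have hstep : Real.cos (α (j+1))^2 * Gaux s α (j+2) n
        ≤ Real.cos (α (j+1)) * (Gaux s α (j+1) (n+1)
            - ∏ i ∈ Finset.range n, Real.cos (α (j + 2 + i))) := by
      have h1 : Real.cos (α (j+1)) * Gaux s α (j+2) n
          ≤ Gaux s α (j+1) (n+1) - ∏ i ∈ Finset.range n, Real.cos (α (j + 2 + i)) := by
        nlinarith [mul_nonneg hm.le h0]
      nlinarith [mul_le_mul_of_nonneg_left h1 hc1.le]
    have hs := hsm j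
    nlinarith [mul_le_mul_of_nonneg_right hs h0']

lemma Pprod_eq (α : ℤ → ℝ) (a : ℤ) :
    ∀ n : ℕ, Pprod α a (a + n) = ∏ i ∈ Finset.range n, Real.cos (α (a + i)) := by
  intro n
  induction n with
  | zero => simp [Pprod]
  | succ n ih =>
    have h2 : a + ((n+1:ℕ):ℤ) = a + (n:ℤ) + 1 := by push_cast; ring
    have h1 : Finset.Ico a (a + (n:ℤ) + 1) = insert (a+(n:ℤ)) (Finset.Ico a (a+(n:ℤ))) := by
      ext x; simp only [Finset.mem_Ico, Finset.mem_insert]; omega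
    rw [Pprod, h2, h1, Finset.prod_insert (by simp), Finset.prod_range_succ, ← Pprod, ih]
    ring

set_option maxHeartbeats 1000000 in
theorem stmt17 (s α : ℤ → ℝ) (N : ℤ) (hN : 2 ≤ N) (hper : α N = α 0)
    (m : ℝ) (hm : 0 < m) (hsm : ∀ i, m ≤ s i)
    (hα : ∀ i, 0 < Real.cos (α i)) (hα' : ∀ i, Real.cos (α i) ≤ 1) (θ : ℝ) :
    G s α 1 N /
        (G s α 0 N - (Real.cos (α 0))^2 * G s α 1 (N-1)
          + 2 * ((-1 : ℝ)^(N+1).toNat * Pprod α 0 N)) < 1 / (2 * m) ∧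
    G s α 0 (N-1) /
        (G s α 0 N - (Real.cos (α 0))^2 * G s α 1 (N-1)
          + 2 * ((-1 : ℝ)^(N+1).toNat * Pprod α 0 N)) < 1 / (2 * m) ∧
    Real.cos (α 0) * G s α 1 (N-1) /
        (G s α 0 N - (Real.cos (α 0))^2 * G s α 1 (N-1)
          + 2 * ((-1 : ℝ)^(N+1).toNat * Pprod α 0 N)) < 1 / (2 * m) ∧
    |(-1 : ℝ)^(N+1).toNat * Pprod α 1 N| /
        (G s α 0 N - (Real.cos (α 0))^2 * G s α 1 (N-1)
          + 2 * ((-1 : ℝ)^(N+1).toNat * Pprod α 0 N)) < 1 / (2 * m) ∧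
    |(1 / (G s α 0 N - (Real.cos (α 0))^2 * G s α 1 (N-1)
          + 2 * ((-1 : ℝ)^(N+1).toNat * Pprod α 0 N))) *
        ((G s α 1 N + Real.cos (α 0) * G s α 1 (N-1)
            - (-1 : ℝ)^(N+1).toNat * Pprod α 1 N) * Real.sin (α 0 + θ)
          + (G s α 0 (N-1) + Real.cos (α 0) * G s α 1 (N-1)
            - (-1 : ℝ)^(N+1).toNat * Pprod α 1 N) * Real.sin (α 0 - θ))| < 3 / m := by
  obtain ⟨n, hn⟩ : ∃ n : ℕ, N = (n:ℤ) + 2 := ⟨(N-2).toNat, by omega⟩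
  subst hn
  -- rewrite G and Pprod into Gaux / range products
  have hG1N : G s α 1 ((n:ℤ)+2) = Gaux s α 1 (n+2) := by rw [G]; congr 1 <;> omega
  have hG0N : G s α 0 ((n:ℤ)+2) = Gaux s α 0 (n+3) := by rw [G]; congr 1 <;> omega
  have hG0N1 : G s α 0 ((n:ℤ)+2-1) = Gaux s α 0 (n+2) := by rw [G]; congr 1 <;> omega
  have hG1N1 : G s α 1 ((n:ℤ)+2-1) = Gaux s α 1 (n+1) := by rw [G]; congr 1 <;> omega
  have hP0 : Pprod α 0 ((n:ℤ)+2) = ∏ i ∈ Finset.range (n+2), Real.cos (α i) := by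
    have h := Pprod_eq α 0 (n+2)
    rw [show ((0:ℤ) + ((n+2:ℕ):ℤ)) = (n:ℤ)+2 by push_cast; ring] at h
    simpa using h
  have hP1 : Pprod α 1 ((n:ℤ)+2) = ∏ i ∈ Finset.range (n+1), Real.cos (α (1+i)) := by
    have h := Pprod_eq α 1 (n+1)
    rw [show ((1:ℤ) + ((n+1:ℕ):ℤ)) = (n:ℤ)+2 by push_cast; ring] at h
    exact h
  rw [hG1N, hG0N, hG0N1, hG1N1, hP0, hP1]
  -- abbreviations
  set X := Gaux s α 1 (n+2) with hX
  set Y := Gaux s α 0 (n+2) with hY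
  set Z := Gaux s α 1 (n+1) with hZ
  set W := Gaux s α 0 (n+3) with hW
  set U := Gaux s α 2 (n+1) with hU
  set V := Gaux s α 0 (n+1) with hV
  set P0 := ∏ i ∈ Finset.range (n+2), Real.cos (α i) with hP0d
  set P1 := ∏ i ∈ Finset.range (n+1), Real.cos (α (1+(i:ℤ))) with hP1d
  set e := ((-1 : ℝ)^(((n:ℤ)+2)+1).toNat) with he
  set c0 := Real.cos (α 0) with hc0d
  set c1 := Real.cos (α 1) with hc1d
  set cn := Real.cos (α ((n:ℤ)+1)) with hcnd
  set P2 := ∏ i ∈ Finset.range (n+1), Real.cos (α (2+(i:ℤ))) with hP2d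
  set P0' := ∏ i ∈ Finset.range (n+1), Real.cos (α (i:ℤ)) with hP0'd
  have hper' : α ((n:ℤ)+2) = α 0 := hper
  -- basic positivity
  have hc0 : 0 < c0 := hα _
  have hc1 : 0 < c1 := hα _
  have hcn : 0 < cn := hα _
  have hP0pos : 0 < P0 := Finset.prod_pos fun i _ => hα _
  have hP1pos : 0 < P1 := Finset.prod_pos fun i _ => hα _
  have hP2pos : 0 < P2 := Finset.prod_pos fun i _ => hα _
  have hP0'pos : 0 < P0' := Finset.prod_pos fun i _ => hα _
  have hU0 : 0 ≤ U := (master s α m hm hsm hα (n+1) 2).1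
  have hV0 : 0 ≤ V := (master s α m hm hsm hα (n+1) 0).1
  have hZ0 : 0 < Z := by
    have h := master s α m hm hsm hα n 1
    obtain ⟨h1, h2⟩ := h
    have hp : 0 < ∏ i ∈ Finset.range n, Real.cos (α (1 + (i:ℤ))) :=
      Finset.prod_pos fun i _ => hα _
    have hc : 0 < Real.cos (α (1 + (n:ℤ))) := hα _
    nlinarith [mul_nonneg (by linarith : (0:ℝ) ≤ Real.cos (α (1 + (n:ℤ))) + 2*m) h1]
  -- F1 : P1 + (c0 + 2m) Z ≤ X
  have F1 : P1 + (c0 + 2*m) * Z ≤ X := by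
    have h := (master s α m hm hsm hα (n+1) 1).2
    rw [show ((1:ℤ) + ((n+1:ℕ):ℤ)) = (n:ℤ)+2 by push_cast; ring, hper'] at h
    exact h
  -- F2 : P0' + (cn + 2m) V ≤ Y
  have F2 : P0' + (cn + 2*m) * V ≤ Y := by
    have h := (master s α m hm hsm hα (n+1) 0).2
    simp only [zero_add] at h
    rw [show (((n+1:ℕ)):ℤ) = (n:ℤ)+1 by push_cast; ring] at h
    exact h
  -- F3 : P1 + (c0 + 2m) Z ≤ Y
  have F3 : P1 + (c0 + 2*m) * Z ≤ Y := by
    have h := masterL s α m hm hsm hα (n+1) 0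
    simp only [zero_add] at h
    exact h
  -- F4 : P2 + (c1 + 2m) U ≤ X
  have F4 : P2 + (c1 + 2*m) * U ≤ X := by
    have h := masterL s α m hm hsm hα (n+1) 1
    simp only [show ∀ i : ℕ, ((1:ℤ) + 1 + (i:ℤ)) = 2 + (i:ℤ) from fun i => by ring,
      show ((1:ℤ)+1) = 2 from rfl] at h
    exact h
  -- F5 : W = (2 s 0 + c0 + c1) X - c1² U
  have F5 : W = (2 * s 0 + c0 + c1) * X - c1^2 * U := by
    have h := leftrec s α (n+1) 0
    simp only [zero_add, show ((0:ℤ)+2) = 2 from rfl] at h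
    exact h
  -- F6 : W = (2 s (n+1) + cn + c0) Y - cn² V
  have F6 : W = (2 * s ((n:ℤ)+1) + cn + c0) * Y - cn^2 * V := by
    have h := Gaux_rec s α 0 (n+1)
    simp only [zero_add] at h
    rw [show (((n+1:ℕ)):ℤ) = (n:ℤ)+1 by push_cast; ring] at h
    rw [show ((n:ℤ)+1+1) = (n:ℤ)+2 by ring, hper'] at h
    exact h
  -- product identities
  have I8 : c1 * P2 = P1 * c0 := by
    have a1 : ∏ i ∈ Finset.range (n+2), Real.cos (α (1+(i:ℤ)))
        = P2 * c1 := by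
      rw [Finset.prod_range_succ']
      simp only [show ∀ i : ℕ, ((1:ℤ) + ((i+1:ℕ):ℤ)) = 2 + (i:ℤ) from fun i => by push_cast; ring,
        Nat.cast_zero, add_zero, hP2d]
      rfl
    have a2 : ∏ i ∈ Finset.range (n+2), Real.cos (α (1+(i:ℤ)))
        = P1 * c0 := by
      rw [Finset.prod_range_succ]
      rw [show ((1:ℤ) + ((n+1:ℕ):ℤ)) = (n:ℤ)+2 by push_cast; ring, hper']
    rw [← a2, a1]; ring
  have I9 : P0 = P1 * c0 := by
    rw [hP0d, Finset.prod_range_succ']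
    simp only [show ∀ i : ℕ, (((i+1:ℕ):ℤ)) = 1 + (i:ℤ) from fun i => by push_cast; ring,
      Nat.cast_zero]
    rfl
  have I9b : P0 = P0' * cn := by
    rw [hP0d, Finset.prod_range_succ,
      show (((n+1:ℕ)):ℤ) = (n:ℤ)+1 by push_cast; ring]
  -- sign facts
  have habs : |e| = 1 := by rw [he, abs_pow, abs_neg, abs_one, one_pow]
  have he1 : -1 ≤ e := by have := neg_abs_le e; rwa [habs] at this
  have he2 : e ≤ 1 := by have := le_abs_self e; rwa [habs] at this
  have heP0 : -P0 ≤ e * P0 := by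
    have h := mul_nonneg (show (0:ℝ) ≤ e + 1 by linarith) hP0pos.le
    linarith only [h]
  have heP1a : e * P1 ≤ P1 := by
    have h := mul_nonneg (show (0:ℝ) ≤ 1 - e by linarith) hP1pos.le
    linarith only [h]
  have heP1b : -P1 ≤ e * P1 := by
    have h := mul_nonneg (show (0:ℝ) ≤ e + 1 by linarith) hP1pos.le
    linarith only [h]
  -- positivity of X, Y
  have hX0 : 0 < X := by
    have h := mul_nonneg (show (0:ℝ) ≤ c0 + 2*m by linarith) hZ0.le
    linarith only [h, F1, hP1pos]
  have hY0 : 0 < Y := by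
    have h := mul_nonneg (show (0:ℝ) ≤ c0 + 2*m by linarith) hZ0.le
    linarith only [h, F3, hP1pos]
  -- main denominator bounds
  have A1 := mul_le_mul_of_nonneg_left F1 hc0.le
  have A2 := mul_le_mul_of_nonneg_left F2 hcn.le
  have A3 := mul_le_mul_of_nonneg_left F3 hc0.le
  have A4 := mul_le_mul_of_nonneg_left F4 hc1.le
  have Bz : 0 < m * (c0 * Z) := mul_pos hm (mul_pos hc0 hZ0)
  have Bu : 0 ≤ m * (c1 * U) := mul_nonneg hm.le (mul_nonneg hc1.le hU0)
  have Bv : 0 ≤ m * (cn * V) := mul_nonneg hm.le (mul_nonneg hcn.le hV0)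
  have Goal1 : 2*m*X < W - c0^2 * Z + 2 * (e * P0) := by
    have As : m * X ≤ s 0 * X := mul_le_mul_of_nonneg_right (hsm 0) hX0.le
    rw [F5]
    linarith only [A1, A4, As, Bz, Bu, I8, I9, heP0]
  have Goal2 : 2*m*Y < W - c0^2 * Z + 2 * (e * P0) := by
    have As : m * Y ≤ s ((n:ℤ)+1) * Y := mul_le_mul_of_nonneg_right (hsm _) hY0.le
    rw [F6]
    linarith only [A2, A3, As, Bz, Bv, I9, I9b, heP0]
  set D := W - c0^2 * Z + 2 * (e * P0) with hD
  have hD0 : 0 < D := by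
    have h : 0 < 2*m*X := by positivity
    linarith only [h, Goal1]
  have h2mpos : (0:ℝ) < 2*m := by linarith
  have hZX : c0 * Z < X := by
    linarith only [F1, hP1pos, mul_pos hm hZ0]
  have hP1X : P1 < X := by
    linarith only [F1, mul_pos hm hZ0, mul_nonneg hc0.le hZ0.le]
  have hcz : 2*m*(c0*Z) < D := by
    linarith only [mul_lt_mul_of_pos_left hZX h2mpos, Goal1]
  have hp1 : 2*m*P1 < D := by
    linarith only [mul_lt_mul_of_pos_left hP1X h2mpos, Goal1]
  refine ⟨?_, ?_, ?_, ?_, ?_⟩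
  · rw [div_lt_div_iff₀ hD0 h2mpos]; linarith only [Goal1]
  · rw [div_lt_div_iff₀ hD0 h2mpos]; linarith only [Goal2]
  · rw [div_lt_div_iff₀ hD0 h2mpos]; linarith only [hcz]
  · rw [div_lt_div_iff₀ hD0 h2mpos]
    rw [abs_mul, habs, one_mul, abs_of_pos hP1pos]
    linarith only [hp1]
  · set A := X + c0 * Z - e * P1 with hA
    set B := Y + c0 * Z - e * P1 with hB
    have hczZ : 0 ≤ c0 * Z := mul_nonneg hc0.le hZ0.le
    have hA0 : 0 < A := by
      rw [hA]; linarith only [heP1a, hP1X, hczZ]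
    have hB0 : 0 < B := by
      have h : P1 < Y := by
        linarith only [F3, mul_pos hm hZ0, mul_nonneg hc0.le hZ0.le]
      rw [hB]; linarith only [heP1a, h, hczZ]
    have hmeP1 : 2*m*(-P1) ≤ 2*m*(e*P1) := by
      have h := mul_le_mul_of_nonneg_left heP1b (le_of_lt h2mpos)
      linarith only [h]
    have h2mA : 2*m*A < 3*D := by
      rw [hA]; linarith only [Goal1, hcz, hp1, hmeP1]
    have h2mB : 2*m*B < 3*D := by
      rw [hB]; linarith only [Goal2, hcz, hp1, hmeP1]
    have hsin1 : |Real.sin (α 0 + θ)| ≤ 1 := Real.abs_sin_le_one _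
    have hsin2 : |Real.sin (α 0 - θ)| ≤ 1 := Real.abs_sin_le_one _
    have hEb : |A * Real.sin (α 0 + θ) + B * Real.sin (α 0 - θ)| ≤ A + B := by
      calc |A * Real.sin (α 0 + θ) + B * Real.sin (α 0 - θ)|
          ≤ |A * Real.sin (α 0 + θ)| + |B * Real.sin (α 0 - θ)| := abs_add_le _ _
        _ ≤ A + B := by
            rw [abs_mul, abs_mul, abs_of_pos hA0, abs_of_pos hB0]
            have g1 : A * |Real.sin (α 0 + θ)| ≤ A * 1 :=
              mul_le_mul_of_nonneg_left hsin1 hA0.le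
            have g2 : B * |Real.sin (α 0 - θ)| ≤ B * 1 :=
              mul_le_mul_of_nonneg_left hsin2 hB0.le
            linarith only [g1, g2]
    rw [abs_mul, abs_of_pos (by positivity : (0:ℝ) < 1/D)]
    calc 1/D * |A * Real.sin (α 0 + θ) + B * Real.sin (α 0 - θ)|
        ≤ 1/D * (A + B) := mul_le_mul_of_nonneg_left hEb (by positivity)
      _ < 3/m := by
          rw [one_div, ← div_eq_inv_mul, div_lt_div_iff₀ hD0 hm]
          linarith only [h2mA, h2mB]
end
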